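/- arXiv:1701.00429 — 2 statements merged into one kernel-verified Lean document; each statement's English description precedes it below -/
import Mathlib

section
/- (Claim 4.10) Let p ∈ {0, …, n} and let j be an integer with 2 ≤ j ≤ l_p, and set q = a_j^{(p)}. For each 0 ≤ i ≤ j − 2 the set {t ∈ T : a_{i+1}^{(p)} < t ≤ a_i^{(p)}} is nonempty; let τ_i denote its maximum. Then l_q† ≥ j, and for every 2 ≤ l ≤ j one has a_{j−l+1}^{(p)} < a_l^{(q)†} ≤ τ_{j−l}. -/
/-- `d(p) = max { s j : t j ≤ p }`, with `⊥` meaning "undefined" (i.e. `-∞`). -/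
noncomputable def dvalue (m : ℕ) (s t : ℕ → ℤ) (p : ℤ) : WithBot ℤ :=
  ((Finset.range m).filter (fun j => t j ≤ p)).sup (fun j => (s j : WithBot ℤ))

/-- `d†(p) = min { t j : s j ≥ p }`, with `⊤` meaning "undefined" (i.e. `+∞`). -/
noncomputable def ddual (m : ℕ) (s t : ℕ → ℤ) (p : ℤ) : WithTop ℤ :=
  ((Finset.range m).filter (fun j => p ≤ s j)).inf (fun j => (t j : WithTop ℤ))

/-- The extension of `d` to `WithBot ℤ`, sending `⊥` to `⊥`. -/
noncomputable def dW (m : ℕ) (s t : ℕ → ℤ) : WithBot ℤ → WithBot ℤ :=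
  WithBot.recBotCoe ⊥ (dvalue m s t)

/-- The extension of `d†` to `WithTop ℤ`, sending `⊤` to `⊤`. -/
noncomputable def dtW (m : ℕ) (s t : ℕ → ℤ) : WithTop ℤ → WithTop ℤ :=
  WithTop.recTopCoe ⊤ (ddual m s t)

/-- The (total extension of the) sequence `a_i^{(p)}`:
`a_0 = p`, `a_1 = p - 1`, `a_{i+2} = d(a_i)`.  For `i ≤ l_p` this agrees with the
sequence of the paper. -/
noncomputable def aSeq (m : ℕ) (s t : ℕ → ℤ) (p : ℤ) : ℕ → WithBot ℤ
  | 0 => (p : WithBot ℤ)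
  | 1 => ((p - 1 : ℤ) : WithBot ℤ)
  | i + 2 => dW m s t (aSeq m s t p i)

/-- The length `l_p`: `l_0 = 0`, and for `p ≠ 0` it is the least `j ≥ 1` with
`d(a_{j-1}^{(p)}) = d(a_j^{(p)})` (undefined values compared as `⊥`). -/
noncomputable def lSeq (m : ℕ) (s t : ℕ → ℤ) (p : ℤ) : ℕ :=
  if p = 0 then 0
  else sInf {j : ℕ | 1 ≤ j ∧ dW m s t (aSeq m s t p (j - 1)) = dW m s t (aSeq m s t p j)}

/-- The (total extension of the) dual sequence `a_i^{(p)†}`: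
`a_0 = p`, `a_1 = p + 1`, `a_{i+2} = d†(a_i)`. -/
noncomputable def aSeqD (m : ℕ) (s t : ℕ → ℤ) (p : ℤ) : ℕ → WithTop ℤ
  | 0 => (p : WithTop ℤ)
  | 1 => ((p + 1 : ℤ) : WithTop ℤ)
  | i + 2 => dtW m s t (aSeqD m s t p i)

/-- The dual length `l_p†`: `l_n† = 0`, and for `p ≠ n` it is the least `j ≥ 1` with
`d†(a_{j-1}^{(p)†}) = d†(a_j^{(p)†})` (undefined values compared as `⊤`). -/
noncomputable def lSeqD (n : ℤ) (m : ℕ) (s t : ℕ → ℤ) (p : ℤ) : ℕ :=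
  if p = n then 0
  else sInf {j : ℕ | 1 ≤ j ∧ dtW m s t (aSeqD m s t p (j - 1)) = dtW m s t (aSeqD m s t p j)}

section Aux
variable (m : ℕ) (s t : ℕ → ℤ)

lemma dvalue_mono : Monotone (dvalue m s t) := fun x y hxy =>
  Finset.sup_mono (Finset.monotone_filter_right _ (fun k _ hk => le_trans hk hxy))

lemma dW_mono : Monotone (dW m s t) := by
  intro x y hxy
  induction x using WithBot.recBotCoe with
  | bot => simp [dW]
  | coe x =>
    induction y using WithBot.recBotCoe with
    | bot => simp at hxy
    | coe y =>
      simpa [dW] using dvalue_mono m s t (WithBot.coe_le_coe.1 hxy)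

lemma ddual_mono : Monotone (ddual m s t) := fun x y hxy =>
  Finset.inf_mono (Finset.monotone_filter_right _ (fun k _ hk => le_trans hxy hk))

lemma dtW_mono : Monotone (dtW m s t) := by
  intro x y hxy
  induction y using WithTop.recTopCoe with
  | top => simp [dtW]
  | coe y =>
    induction x using WithTop.recTopCoe with
    | top => simp at hxy
    | coe x =>
      simpa [dtW] using ddual_mono m s t (WithTop.coe_le_coe.1 hxy)

lemma aSeq_two (p : ℤ) (i : ℕ) :
    aSeq m s t p (i + 2) = dW m s t (aSeq m s t p i) := by
  simp [aSeq]

lemma aSeqD_two (p : ℤ) (i : ℕ) :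
    aSeqD m s t p (i + 2) = dtW m s t (aSeqD m s t p i) := by
  simp [aSeqD]

@[simp] lemma aSeq_zero (p : ℤ) : aSeq m s t p 0 = (p : WithBot ℤ) := rfl

@[simp] lemma aSeq_one (p : ℤ) : aSeq m s t p 1 = ((p - 1 : ℤ) : WithBot ℤ) := rfl

@[simp] lemma aSeqD_zero (p : ℤ) : aSeqD m s t p 0 = (p : WithTop ℤ) := rfl

@[simp] lemma aSeqD_one (p : ℤ) : aSeqD m s t p 1 = ((p + 1 : ℤ) : WithTop ℤ) := rfl

lemma dW_coe (x : ℤ) : dW m s t (x : WithBot ℤ) = dvalue m s t x := rfl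

lemma dtW_coe (x : ℤ) : dtW m s t (x : WithTop ℤ) = ddual m s t x := rfl

variable (hlen : ∀ j : ℕ, j < m → s j + 2 ≤ t j)
include hlen

lemma dvalue_le (x : ℤ) : dvalue m s t x ≤ ((x - 2 : ℤ) : WithBot ℤ) := by
  apply Finset.sup_le
  intro k hk
  simp only [Finset.mem_filter, Finset.mem_range] at hk
  exact_mod_cast le_trans (by linarith [hlen k hk.1]) (by linarith [hk.2] : t k - 2 ≤ x - 2)

lemma aSeq_succ_le (p : ℤ) : ∀ i, aSeq m s t p (i + 1) ≤ aSeq m s t p i := by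
  intro i
  induction i using Nat.strong_induction_on with
  | _ i ih =>
    match i with
    | 0 =>
      rw [aSeq_zero, aSeq_one]
      exact_mod_cast (by linarith : p - 1 ≤ p)
    | 1 =>
      rw [show (1 : ℕ) + 1 = 0 + 2 from rfl, aSeq_two, aSeq_zero, dW_coe]
      refine le_trans (dvalue_le m s t hlen p) ?_
      rw [aSeq_one]; exact_mod_cast (by linarith : p - 2 ≤ p - 1)
    | (i + 2) =>
      rw [show i + 2 + 1 = (i + 1) + 2 from rfl, aSeq_two, aSeq_two]
      exact dW_mono m s t (ih i (by omega))

lemma aSeq_le_of_le (p : ℤ) : ∀ i i', i ≤ i' → aSeq m s t p i' ≤ aSeq m s t p i := by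
  intro i i' h
  induction i' with
  | zero => simp_all
  | succ k ih =>
    rcases Nat.lt_or_ge i (k+1) with h' | h'
    · exact le_trans (aSeq_succ_le m s t hlen p k) (ih (by omega))
    · have : i = k + 1 := by omega
      simp [this]

end Aux
section Aux2
variable (m : ℕ) (s t : ℕ → ℤ)

lemma coe_le_dvalue {x : ℤ} {k : ℕ} (hk : k < m) (h : t k ≤ x) :
    (s k : WithBot ℤ) ≤ dvalue m s t x := by
  rw [dvalue]
  exact Finset.le_sup (f := fun j => ((s j : WithBot ℤ)))
    (by simp [Finset.mem_filter, Finset.mem_range, hk, h])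

lemma ddual_le_coe {x : ℤ} {k : ℕ} (hk : k < m) (h : x ≤ s k) :
    ddual m s t x ≤ (t k : WithTop ℤ) := by
  rw [ddual]
  exact Finset.inf_le (f := fun j => ((t j : WithTop ℤ)))
    (by simp [Finset.mem_filter, Finset.mem_range, hk, h])

lemma dvalue_eq_coe {x y : ℤ} (h : dvalue m s t x = (y : WithBot ℤ)) :
    ∃ k, k < m ∧ t k ≤ x ∧ s k = y := by
  have hne : ((Finset.range m).filter (fun j => t j ≤ x)).Nonempty := by
    rw [Finset.nonempty_iff_ne_empty]
    intro he
    rw [dvalue, he] at h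
    simp at h
  obtain ⟨k, hk, hk2⟩ := Finset.exists_mem_eq_sup _ hne (fun j => ((s j : WithBot ℤ)))
  simp only [Finset.mem_filter, Finset.mem_range] at hk
  refine ⟨k, hk.1, hk.2, ?_⟩
  rw [dvalue] at h
  rw [h] at hk2
  exact_mod_cast hk2.symm

lemma ddual_eq_coe {x y : ℤ} (h : ddual m s t x = (y : WithTop ℤ)) :
    ∃ k, k < m ∧ x ≤ s k ∧ t k = y := by
  have hne : ((Finset.range m).filter (fun j => x ≤ s j)).Nonempty := by
    rw [Finset.nonempty_iff_ne_empty]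
    intro he
    rw [ddual, he] at h
    simp at h
  obtain ⟨k, hk, hk2⟩ := Finset.exists_mem_eq_inf _ hne (fun j => ((t j : WithTop ℤ)))
  simp only [Finset.mem_filter, Finset.mem_range] at hk
  refine ⟨k, hk.1, hk.2, ?_⟩
  rw [ddual] at h
  rw [h] at hk2
  exact_mod_cast hk2.symm

lemma aSeqD_succ_le (hlen : ∀ j : ℕ, j < m → s j + 2 ≤ t j) (q : ℤ) :
    ∀ l, aSeqD m s t q l ≤ aSeqD m s t q (l + 1) := by
  intro l
  induction l using Nat.strong_induction_on with
  | _ l ih =>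
    match l with
    | 0 =>
      rw [aSeqD_zero, aSeqD_one]
      exact_mod_cast (by linarith : q ≤ q + 1)
    | 1 =>
      rw [show (1 : ℕ) + 1 = 0 + 2 from rfl, aSeqD_two, aSeqD_zero, dtW_coe, aSeqD_one]
      apply Finset.le_inf
      intro k hk
      simp only [Finset.mem_filter, Finset.mem_range] at hk
      exact_mod_cast (by linarith [hlen k hk.1, hk.2] : q + 1 ≤ t k)
    | (l + 2) =>
      rw [show l + 2 + 1 = (l + 1) + 2 from rfl, aSeqD_two, aSeqD_two]
      exact dtW_mono m s t (ih l (by omega))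

end Aux2
theorem claim_4_10
    (n : ℤ) (m : ℕ) (s t : ℕ → ℤ)
    (hn : 0 ≤ n)
    (hsmono : ∀ i j : ℕ, i < j → j < m → s i < s j)
    (htmono : ∀ i j : ℕ, i < j → j < m → t i < t j)
    (hs0 : ∀ j : ℕ, j < m → 0 ≤ s j)
    (htn : ∀ j : ℕ, j < m → t j ≤ n)
    (hlen : ∀ j : ℕ, j < m → s j + 2 ≤ t j)
    (p : ℤ) (hp0 : 0 ≤ p) (hpn : p ≤ n)
    (j : ℕ) (hj2 : 2 ≤ j) (hjl : j ≤ lSeq m s t p)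
    (q : ℤ) (hq : aSeq m s t p j = (q : WithBot ℤ)) :
    (∀ i : ℕ, i ≤ j - 2 →
      ∃ τ : ℤ, IsGreatest {x : ℤ | (∃ k : ℕ, k < m ∧ t k = x) ∧
        aSeq m s t p (i + 1) < (x : WithBot ℤ) ∧ (x : WithBot ℤ) ≤ aSeq m s t p i} τ) ∧
    j ≤ lSeqD n m s t q ∧
    (∀ l : ℕ, 2 ≤ l → l ≤ j →
      ∀ τ : ℤ, IsGreatest {x : ℤ | (∃ k : ℕ, k < m ∧ t k = x) ∧
        aSeq m s t p (j - l + 1) < (x : WithBot ℤ) ∧ (x : WithBot ℤ) ≤ aSeq m s t p (j - l)} τ →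
      ∃ v : ℤ, aSeqD m s t q l = (v : WithTop ℤ) ∧
        aSeq m s t p (j - l + 1) < (v : WithBot ℤ) ∧ v ≤ τ) := by
  -- p ≠ 0
  have hpne : p ≠ 0 := by
    intro h
    rw [h, lSeq, if_pos rfl] at hjl
    omega
  have hlseq : lSeq m s t p
      = sInf {i : ℕ | 1 ≤ i ∧ dW m s t (aSeq m s t p (i - 1)) = dW m s t (aSeq m s t p i)} := by
    rw [lSeq, if_neg hpne]
  -- non-stabilization
  have hne : ∀ i : ℕ, i + 2 ≤ j →
      dW m s t (aSeq m s t p i) ≠ dW m s t (aSeq m s t p (i + 1)) := by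
    intro i hi heq
    have hmem : (i + 1) ∈ {i : ℕ | 1 ≤ i ∧
        dW m s t (aSeq m s t p (i - 1)) = dW m s t (aSeq m s t p i)} := by
      refine ⟨by omega, ?_⟩
      simpa using heq
    have h2 := Nat.sInf_le hmem
    rw [← hlseq] at h2
    omega
  have hanti := aSeq_le_of_le m s t hlen p
  -- integer values of the sequence
  have hcoe : ∀ i : ℕ, ∃ α : ℤ, i ≤ j → aSeq m s t p i = (α : WithBot ℤ) ∧ q ≤ α := by
    intro i
    by_cases hij : i ≤ j
    · have h1 : (q : WithBot ℤ) ≤ aSeq m s t p i := by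
        rw [← hq]; exact hanti i j hij
      obtain ⟨b, hb, hqb⟩ := WithBot.coe_le_iff.1 h1
      exact ⟨b, fun _ => ⟨hb, hqb⟩⟩
    · exact ⟨0, fun h => absurd h hij⟩
  choose α hα using hcoe
  have hαeq : ∀ i : ℕ, i ≤ j → aSeq m s t p i = ((α i : ℤ) : WithBot ℤ) :=
    fun i h => (hα i h).1
  have hα0 : α 0 = p := by
    have := hαeq 0 (by omega)
    rw [aSeq_zero] at this
    exact_mod_cast this.symm
  have hα1 : α 1 = p - 1 := by
    have := hαeq 1 (by omega)
    rw [aSeq_one] at this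
    exact_mod_cast this.symm
  have hαj : α j = q := by
    have := hαeq j le_rfl
    rw [hq] at this
    exact_mod_cast this.symm
  have hα2 : α 2 ≤ p - 2 := by
    have h1 := hαeq 2 hj2
    rw [show (2 : ℕ) = 0 + 2 from rfl, aSeq_two, aSeq_zero, dW_coe] at h1
    have := dvalue_le m s t hlen p
    rw [h1] at this
    exact_mod_cast this
  -- weak monotonicity on integer values
  have hαle : ∀ i i' : ℕ, i ≤ i' → i' ≤ j → α i' ≤ α i := by
    intro i i' h h'
    have := hanti i i' h
    rw [hαeq i (by omega), hαeq i' h'] at this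
    exact_mod_cast this
  -- strict monotonicity
  have hstrict : ∀ i : ℕ, i + 1 ≤ j → α (i + 1) < α i := by
    intro i hi
    match i, hi with
    | 0, _ => rw [hα0, hα1]; omega
    | 1, _ =>
      show α 2 < α 1
      rw [hα1]; omega
    | (i + 2), hi =>
      refine lt_of_le_of_ne (hαle _ _ (by omega) (by omega)) ?_
      intro heq
      apply hne i (by omega)
      rw [show i + 2 = i + 2 from rfl] at heq
      have e1 : aSeq m s t p (i + 2) = dW m s t (aSeq m s t p i) := aSeq_two m s t p i
      have e2 : aSeq m s t p (i + 3) = dW m s t (aSeq m s t p (i + 1)) := aSeq_two m s t p (i+1)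
      rw [← e1, ← e2, hαeq (i+2) (by omega), hαeq (i+3) (by omega)]
      exact_mod_cast heq.symm
  -- the witnesses κ i realizing d(a_i)
  have hκex : ∀ i : ℕ, ∃ k : ℕ, i + 2 ≤ j → (k < m ∧ t k ≤ α i ∧ s k = α (i + 2) ∧
      α (i + 1) < t k ∧ ∀ k' : ℕ, k' < m → t k' ≤ α i → s k' ≤ α (i + 2)) := by
    intro i
    by_cases hij : i + 2 ≤ j
    · have hdv : dvalue m s t (α i) = ((α (i + 2) : ℤ) : WithBot ℤ) := by
        rw [← dW_coe, ← hαeq i (by omega), ← aSeq_two, hαeq (i + 2) hij]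
      obtain ⟨k, hkm, hkt, hks⟩ := dvalue_eq_coe m s t hdv
      refine ⟨k, fun _ => ⟨hkm, hkt, hks, ?_, ?_⟩⟩
      · by_contra hcon
        push_neg at hcon
        apply hne i hij
        have h1 : ((s k : ℤ) : WithBot ℤ) ≤ dvalue m s t (α (i + 1)) :=
          coe_le_dvalue m s t hkm hcon
        have h2 : dvalue m s t (α (i + 1)) ≤ dvalue m s t (α i) :=
          dvalue_mono m s t (hαle i (i + 1) (by omega) (by omega))
        have h3 : dvalue m s t (α (i + 1)) = dvalue m s t (α i) := by
          refine le_antisymm h2 ?_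
          rw [hdv, ← hks]
          exact h1
        rw [hαeq i (by omega), hαeq (i + 1) (by omega), dW_coe, dW_coe]
        exact h3.symm
      · intro k' hk'm hk't
        have h1 : ((s k' : ℤ) : WithBot ℤ) ≤ dvalue m s t (α i) :=
          coe_le_dvalue m s t hk'm hk't
        rw [hdv] at h1
        exact_mod_cast h1
    · exact ⟨0, fun h => absurd h hij⟩
  choose κ hκ using hκex
  -- greatest element of T ∩ (a_{i+1}, a_i]
  have hgreat : ∀ i : ℕ, i + 2 ≤ j →
      IsGreatest {x : ℤ | (∃ k : ℕ, k < m ∧ t k = x) ∧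
        aSeq m s t p (i + 1) < (x : WithBot ℤ) ∧ (x : WithBot ℤ) ≤ aSeq m s t p i} (t (κ i)) := by
    intro i hij
    obtain ⟨hκm, hκt, hκs, hκlt, hκmax⟩ := hκ i hij
    constructor
    · refine ⟨⟨κ i, hκm, rfl⟩, ?_, ?_⟩
      · rw [hαeq (i + 1) (by omega)]
        exact_mod_cast hκlt
      · rw [hαeq i (by omega)]
        exact_mod_cast hκt
    · rintro x ⟨⟨k, hkm, rfl⟩, hx1, hx2⟩
      rw [hαeq i (by omega)] at hx2
      have htk : t k ≤ α i := by exact_mod_cast hx2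
      have hsk : s k ≤ s (κ i) := by
        rw [hκs]; exact hκmax k hkm htk
      rcases lt_trichotomy k (κ i) with h | h | h
      · exact le_of_lt (htmono k (κ i) h hκm)
      · rw [h]
      · exact absurd (hsmono (κ i) k h hkm) (by omega)
  -- the dual sequence stays in the prescribed windows
  have hQ : ∀ l : ℕ, 1 ≤ l → l ≤ j → ∃ β : ℤ,
      aSeqD m s t q l = (β : WithTop ℤ) ∧
      aSeq m s t p (j - l + 1) < (β : WithBot ℤ) ∧
      ((β : WithBot ℤ) ≤ aSeq m s t p (j - l)) ∧
      (2 ≤ l → β ≤ t (κ (j - l))) := by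
    intro l
    induction l using Nat.strong_induction_on with
    | _ l ih =>
      match l with
      | 0 => intro h0; exact absurd h0 (by omega)
      | 1 =>
        intro _ h1j
        refine ⟨q + 1, by rw [aSeqD_one], ?_, ?_, by omega⟩
        · have e : j - 1 + 1 = j := by omega
          rw [e, hq]
          exact_mod_cast (by omega : q < q + 1)
        · rw [hαeq (j - 1) (by omega)]
          have : α j < α (j - 1) := by
            have := hstrict (j - 1) (by omega)
            rwa [show j - 1 + 1 = j by omega] at this
          rw [hαj] at this
          exact_mod_cast (by omega : q + 1 ≤ α (j - 1))
      | 2 =>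
        intro _ h2j
        obtain ⟨hκm, hκt, hκs, hκlt, hκmax⟩ := hκ (j - 2) (by omega)
        rw [show j - 2 + 2 = j by omega, hαj] at hκs
        have hab : aSeqD m s t q 2 = ddual m s t q := by
          rw [show (2 : ℕ) = 0 + 2 from rfl, aSeqD_two, aSeqD_zero, dtW_coe]
        have hub : ddual m s t q ≤ ((t (κ (j - 2)) : ℤ) : WithTop ℤ) :=
          ddual_le_coe m s t hκm (le_of_eq hκs.symm)
        obtain ⟨β, hβeq, hβle⟩ := WithTop.le_coe_iff.1 hub
        obtain ⟨k', hk'm, hk's, hk't⟩ := ddual_eq_coe m s t hβeq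
        refine ⟨β, by rw [hab, hβeq], ?_, ?_, fun _ => hβle⟩
        · rw [hαeq (j - 2 + 1) (by omega)]
          by_contra hcon
          push_neg at hcon
          have hcon' : β ≤ α (j - 2 + 1) := by exact_mod_cast hcon
          apply hne (j - 2) (by omega)
          have h1 : ((s k' : ℤ) : WithBot ℤ) ≤ dvalue m s t (α (j - 2 + 1)) :=
            coe_le_dvalue m s t hk'm (by omega)
          have h2 : dvalue m s t (α (j - 2 + 1)) ≤ dvalue m s t (α (j - 2)) :=
            dvalue_mono m s t (hαle (j - 2) (j - 2 + 1) (by omega) (by omega))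
          have h3 : dvalue m s t (α (j - 2)) = ((q : ℤ) : WithBot ℤ) := by
            rw [← dW_coe, ← hαeq (j - 2) (by omega), ← aSeq_two,
              show j - 2 + 2 = j by omega, hq]
          have h4 : dvalue m s t (α (j - 2 + 1)) = dvalue m s t (α (j - 2)) := by
            refine le_antisymm h2 ?_
            rw [h3]
            refine le_trans ?_ h1
            exact_mod_cast hk's
          rw [hαeq (j - 2) (by omega), hαeq (j - 2 + 1) (by omega), dW_coe, dW_coe]
          exact h4.symm
        · rw [hαeq (j - 2) (by omega)]
          exact_mod_cast le_trans hβle hκt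
      | (l + 3) =>
        intro _ hlj
        obtain ⟨β', hb', hlow', hup', _⟩ := ih (l + 1) (by omega) (by omega) (by omega)
        set i : ℕ := j - (l + 3) with hidef
        have e1 : j - (l + 1) = i + 2 := by omega
        have e2 : j - (l + 1) + 1 = i + 3 := by omega
        obtain ⟨hκm, hκt, hκs, hκlt, hκmax⟩ := hκ i (by omega)
        have hβ'le : β' ≤ s (κ i) := by
          rw [hκs]
          rw [e1, hαeq (i + 2) (by omega)] at hup'
          exact_mod_cast hup'
        have hab : aSeqD m s t q (l + 3) = ddual m s t β' := by
          rw [show l + 3 = (l + 1) + 2 from rfl, aSeqD_two, hb', dtW_coe]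
        have hub : ddual m s t β' ≤ ((t (κ i) : ℤ) : WithTop ℤ) :=
          ddual_le_coe m s t hκm hβ'le
        obtain ⟨β, hβeq, hβle⟩ := WithTop.le_coe_iff.1 hub
        obtain ⟨k', hk'm, hk's, hk't⟩ := ddual_eq_coe m s t hβeq
        refine ⟨β, by rw [hab, hβeq], ?_, ?_, fun _ => hβle⟩
        · rw [show i + 1 = i + 1 from rfl, hαeq (i + 1) (by omega)]
          by_contra hcon
          push_neg at hcon
          have hcon' : β ≤ α (i + 1) := by exact_mod_cast hcon
          have h1 : ((s k' : ℤ) : WithBot ℤ) ≤ dvalue m s t (α (i + 1)) :=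
            coe_le_dvalue m s t hk'm (by omega)
          have h2 : dvalue m s t (α (i + 1)) = aSeq m s t p (i + 3) := by
            rw [show i + 3 = (i + 1) + 2 from rfl, aSeq_two, hαeq (i + 1) (by omega), dW_coe]
          rw [h2, ← e2] at h1
          have h3 : ((β' : ℤ) : WithBot ℤ) ≤ ((s k' : ℤ) : WithBot ℤ) := by
            exact_mod_cast hk's
          exact absurd (lt_of_lt_of_le hlow' (le_trans h3 h1)) (lt_irrefl _)
        · rw [hαeq i (by omega)]
          exact_mod_cast le_trans hβle hκt
  -- q < n
  have hqn : q ≠ n := by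
    have h1 : α j ≤ α 2 := hαle 2 j hj2 le_rfl
    rw [hαj] at h1
    omega
  -- non-stabilization of the dual sequence below j
  have hexcl : ∀ l : ℕ, 1 ≤ l → l < j →
      dtW m s t (aSeqD m s t q (l - 1)) ≠ dtW m s t (aSeqD m s t q l) := by
    intro l hl1 hlj
    obtain ⟨l, rfl⟩ : ∃ l', l = l' + 1 := ⟨l - 1, by omega⟩
    have e0 : l + 1 - 1 = l := by omega
    rw [e0, ← aSeqD_two, ← aSeqD_two]
    show aSeqD m s t q (l + 2) ≠ aSeqD m s t q (l + 3)
    rcases Nat.lt_or_ge (l + 3) (j + 1) with hc | hc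
    · -- both within range
      obtain ⟨β₂, hb₂, _, hup₂, _⟩ := hQ (l + 2) (by omega) (by omega)
      obtain ⟨β₃, hb₃, hlow₃, _, _⟩ := hQ (l + 3) (by omega) (by omega)
      have e : j - (l + 3) + 1 = j - (l + 2) := by omega
      rw [e] at hlow₃
      have : (β₂ : WithBot ℤ) < (β₃ : WithBot ℤ) := lt_of_le_of_lt hup₂ hlow₃
      have hne23 : β₂ ≠ β₃ := by
        intro h; rw [h] at this; exact absurd this (lt_irrefl _)
      rw [hb₂, hb₃]
      exact_mod_cast hne23
    · -- l + 3 = j + 1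
      have hlval : l + 2 = j := by omega
      obtain ⟨βj, hbj, _, hupj, _⟩ := hQ (l + 2) (by omega) (by omega)
      obtain ⟨β', hb', hlow', _, _⟩ := hQ (l + 1) (by omega) (by omega)
      have hβjp : βj ≤ p := by
        rw [show j - (l + 2) = 0 by omega, aSeq_zero] at hupj
        exact_mod_cast hupj
      have hab : aSeqD m s t q (l + 3) = ddual m s t β' := by
        rw [show l + 3 = (l + 1) + 2 from rfl, aSeqD_two, hb', dtW_coe]
      have hα2β' : α 2 < β' := by
        rw [show j - (l + 1) + 1 = 2 by omega, hαeq 2 (by omega)] at hlow'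
        exact_mod_cast hlow'
      have hgt : ((p : ℤ) : WithTop ℤ) < ddual m s t β' := by
        rw [ddual]
        rw [Finset.lt_inf_iff (by exact_mod_cast WithTop.coe_lt_top p)]
        intro k hk
        simp only [Finset.mem_filter, Finset.mem_range] at hk
        have hpk : p < t k := by
          by_contra hcon
          push_neg at hcon
          have h1 : ((s k : ℤ) : WithBot ℤ) ≤ dvalue m s t p := coe_le_dvalue m s t hk.1 hcon
          have h2 : dvalue m s t p = ((α 2 : ℤ) : WithBot ℤ) := by
            rw [← dW_coe, show ((p : ℤ) : WithBot ℤ) = aSeq m s t p 0 from rfl, ← aSeq_two,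
              hαeq 2 (by omega)]
          rw [h2] at h1
          have : s k ≤ α 2 := by exact_mod_cast h1
          omega
        exact_mod_cast hpk
      rw [hab, hbj]
      intro hcon
      rw [← hcon] at hgt
      have : p < βj := by exact_mod_cast hgt
      omega
  -- the stabilization set for the dual sequence is nonempty
  have hSne : {l : ℕ | 1 ≤ l ∧
      dtW m s t (aSeqD m s t q (l - 1)) = dtW m s t (aSeqD m s t q l)}.Nonempty := by
    by_contra hS
    rw [Set.not_nonempty_iff_eq_empty] at hS
    have hne' : ∀ l : ℕ, aSeqD m s t q (l + 2) ≠ aSeqD m s t q (l + 3) := by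
      intro l heq
      have : (l + 1) ∈ {l : ℕ | 1 ≤ l ∧
          dtW m s t (aSeqD m s t q (l - 1)) = dtW m s t (aSeqD m s t q l)} := by
        refine ⟨by omega, ?_⟩
        have e0 : l + 1 - 1 = l := by omega
        rw [e0, ← aSeqD_two, ← aSeqD_two]
        exact heq
      rw [hS] at this
      exact this
    set c : ℕ → WithTop ℤ := fun i => aSeqD m s t q (i + 2) with hc
    have hcmono : ∀ i, c i < c (i + 1) := by
      intro i
      refine lt_of_le_of_ne ?_ (hne' i)
      exact aSeqD_succ_le m s t hlen q (i + 2)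
    have hsm : StrictMono c := strictMono_nat_of_lt_succ hcmono
    set F : Finset (WithTop ℤ) :=
      insert ⊤ ((Finset.range m).image (fun k => ((t k : ℤ) : WithTop ℤ))) with hF
    have hmemF : ∀ i, c i ∈ F := by
      intro i
      have hci : c i = dtW m s t (aSeqD m s t q i) := aSeqD_two m s t q i
      rcases eq_or_ne (aSeqD m s t q i) ⊤ with h | h
      · rw [hci, h, show dtW m s t ⊤ = ⊤ from rfl]
        exact Finset.mem_insert_self _ _
      · obtain ⟨x, hx⟩ := WithTop.ne_top_iff_exists.1 h
        rw [hci, ← hx, dtW_coe]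
        rcases eq_or_ne (ddual m s t x) ⊤ with h' | h'
        · rw [h']; exact Finset.mem_insert_self _ _
        · obtain ⟨y, hy⟩ := WithTop.ne_top_iff_exists.1 h'
          obtain ⟨k, hkm, _, hkt⟩ := ddual_eq_coe m s t hy.symm
          rw [← hy]
          refine Finset.mem_insert_of_mem ?_
          rw [Finset.mem_image]
          exact ⟨k, Finset.mem_range.2 hkm, by rw [hkt]⟩
    have hcard := Finset.card_le_card_of_injOn (s := Finset.range (F.card + 1)) (t := F)
      c (fun a _ => hmemF a) (hsm.injective.injOn)
    rw [Finset.card_range] at hcard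
    omega
  refine ⟨?_, ?_, ?_⟩
  · intro i hi
    exact ⟨t (κ i), hgreat i (by omega)⟩
  · rw [lSeqD, if_neg hqn]
    refine le_csInf hSne ?_
    intro b hb
    obtain ⟨hb1, hb2⟩ := hb
    by_contra hcon
    push_neg at hcon
    exact hexcl b hb1 (by omega) hb2
  · intro l hl2 hlj τ hτ
    obtain ⟨β, hb, hlow, _, hκb⟩ := hQ l (by omega) hlj
    refine ⟨β, hb, hlow, ?_⟩
    have hmem := (hgreat (j - l) (by omega)).1
    exact le_trans (hκb hl2) (hτ.2 hmem)
end

section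
/- For every integer p with 1 ≤ p ≤ n: l_p ≥ 2 if and only if p ∈ T. -/
/-!
Since `d(x) ≤ x - 2`, the sequence `a^{(p)}` eventually drops below every `t_j`, after which
`d` is undefined; so the stopping condition is eventually met and `l_p` is a genuine minimum.
Hence `l_p ≥ 2` exactly when the condition fails at the first step, i.e. when `d(p - 1) ≠ d(p)`.
Moving from `p - 1` to `p` adds to the set `{j : t_j ≤ p}` precisely the index `j` with
`t_j = p`, if there is one, and since both `s` and `t` increase, its `s_j` exceeds all the others.
-/

section

variable {m : ℕ} {s t : ℕ → ℤ}

lemma dvalue_le_sub_two (hlen : ∀ j : ℕ, j < m → s j + 2 ≤ t j) (x : ℤ) :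
    dvalue m s t x ≤ ↑(x - 2) :=
  Finset.sup_le fun j hj => by
    rw [Finset.mem_filter, Finset.mem_range] at hj
    exact WithBot.coe_le_coe.2 (by linarith [hlen j hj.1])

lemma dvalue_eq_bot_of_lt {x : ℤ} (hx : ∀ j : ℕ, j < m → x < t j) : dvalue m s t x = ⊥ :=
  (Finset.sup_eq_bot_iff _ _).2 fun j hj => by
    rw [Finset.mem_filter, Finset.mem_range] at hj
    exact absurd hj.2 (not_le.2 (hx j hj.1))

lemma dW_le_of_le (hlen : ∀ j : ℕ, j < m → s j + 2 ≤ t j) {x : WithBot ℤ} {c : ℤ}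
    (hx : x ≤ c) : dW m s t x ≤ ↑(c - 2) := by
  induction x with
  | bot => exact bot_le
  | coe y =>
    have hyc : y ≤ c := WithBot.coe_le_coe.1 hx
    exact (dvalue_le_sub_two hlen y).trans (WithBot.coe_le_coe.2 (by omega))

lemma dW_eq_bot_of_le {x : WithBot ℤ} {c : ℤ} (hc : ∀ j : ℕ, j < m → c < t j) (hx : x ≤ c) :
    dW m s t x = ⊥ := by
  induction x with
  | bot => rfl
  | coe y =>
    have hyc : y ≤ c := WithBot.coe_le_coe.1 hx
    exact dvalue_eq_bot_of_lt fun j hj => hyc.trans_lt (hc j hj)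

lemma aSeq_le (hlen : ∀ j : ℕ, j < m → s j + 2 ≤ t j) (p : ℤ) :
    ∀ i : ℕ, aSeq m s t p i ≤ ↑(p + 1 - i)
  | 0 => WithBot.coe_le_coe.2 (by omega)
  | 1 => WithBot.coe_le_coe.2 (by omega)
  | i + 2 =>
    (dW_le_of_le hlen (aSeq_le hlen p i)).trans (WithBot.coe_le_coe.2 (by push_cast; omega))

lemma setOf_dW_aSeq_eq_nonempty (hlen : ∀ j : ℕ, j < m → s j + 2 ≤ t j) (p : ℤ) :
    {j : ℕ | 1 ≤ j ∧ dW m s t (aSeq m s t p (j - 1)) = dW m s t (aSeq m s t p j)}.Nonempty := by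
  obtain ⟨b, hb⟩ := ((Finset.range m).image t).bddBelow
  have hlt : ∀ j : ℕ, j < m → b - 1 < t j := fun j hj =>
    (sub_one_lt b).trans_le (hb (by simpa using ⟨j, hj, rfl⟩))
  have hbot : ∀ i : ℕ, p + 2 - b ≤ i → dW m s t (aSeq m s t p i) = ⊥ := fun i hi =>
    dW_eq_bot_of_le hlt ((aSeq_le hlen p i).trans (WithBot.coe_le_coe.2 (by omega)))
  set i := (p + 2 - b).toNat
  refine ⟨i + 1, by omega, ?_⟩
  rw [Nat.add_sub_cancel, hbot i (by omega), hbot (i + 1) (by push_cast; omega)]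

lemma two_le_lSeq_iff (hlen : ∀ j : ℕ, j < m → s j + 2 ≤ t j) {p : ℤ} (hp : p ≠ 0) :
    2 ≤ lSeq m s t p ↔ dvalue m s t (p - 1) ≠ dvalue m s t p := by
  rw [lSeq, if_neg hp, le_csInf_iff' (setOf_dW_aSeq_eq_nonempty hlen p)]
  constructor
  · intro h heq
    exact absurd (h ⟨le_rfl, heq.symm⟩) (by norm_num)
  · rintro hne j ⟨hj, heq⟩
    obtain rfl | hj := hj.eq_or_lt
    · exact absurd heq.symm hne
    · exact hj

lemma dvalue_sub_one_eq (hp : ∀ j : ℕ, j < m → t j ≠ p) :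
    dvalue m s t (p - 1) = dvalue m s t p := by
  unfold dvalue
  congr 1
  refine Finset.filter_congr fun j hj => ?_
  have := hp j (Finset.mem_range.1 hj)
  omega

lemma dvalue_sub_one_lt (hsmono : ∀ i j : ℕ, i < j → j < m → s i < s j)
    (htmono : ∀ i j : ℕ, i < j → j < m → t i < t j) {j : ℕ} (hj : j < m) :
    dvalue m s t (t j - 1) < dvalue m s t (t j) := by
  have hle : (s j : WithBot ℤ) ≤ dvalue m s t (t j) :=
    Finset.le_sup (f := fun j => (s j : WithBot ℤ)) (by simp [hj])
  refine lt_of_lt_of_le ((Finset.sup_lt_iff (WithBot.bot_lt_coe _)).2 fun i hi => ?_) hle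
  rw [Finset.mem_filter, Finset.mem_range] at hi
  have hij : i < j := by
    by_contra! hji
    obtain rfl | hji := hji.eq_or_lt
    · omega
    · linarith [htmono j i hji hi.1]
  exact WithBot.coe_lt_coe.2 (hsmono i j hij hj)

lemma dvalue_sub_one_ne_iff (hsmono : ∀ i j : ℕ, i < j → j < m → s i < s j)
    (htmono : ∀ i j : ℕ, i < j → j < m → t i < t j) {p : ℤ} :
    dvalue m s t (p - 1) ≠ dvalue m s t p ↔ ∃ j : ℕ, j < m ∧ t j = p := by
  constructor
  · intro hne
    by_contra! hp
    exact hne (dvalue_sub_one_eq hp)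
  · rintro ⟨j, hj, rfl⟩
    exact (dvalue_sub_one_lt hsmono htmono hj).ne

end

theorem lp_ge_two_iff_mem_T_general
    (m : ℕ) (s t : ℕ → ℤ)
    (hsmono : ∀ i j : ℕ, i < j → j < m → s i < s j)
    (htmono : ∀ i j : ℕ, i < j → j < m → t i < t j)
    (hlen : ∀ j : ℕ, j < m → s j + 2 ≤ t j)
    (p : ℤ) (hp1 : 1 ≤ p) :
    2 ≤ lSeq m s t p ↔ ∃ j : ℕ, j < m ∧ t j = p := by
  rw [two_le_lSeq_iff hlen (by omega), dvalue_sub_one_ne_iff hsmono htmono]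

theorem lp_ge_two_iff_mem_T
    (n : ℤ) (m : ℕ) (s t : ℕ → ℤ)
    (hn : 0 ≤ n)
    (hsmono : ∀ i j : ℕ, i < j → j < m → s i < s j)
    (htmono : ∀ i j : ℕ, i < j → j < m → t i < t j)
    (hs0 : ∀ j : ℕ, j < m → 0 ≤ s j)
    (htn : ∀ j : ℕ, j < m → t j ≤ n)
    (hlen : ∀ j : ℕ, j < m → s j + 2 ≤ t j)
    (p : ℤ) (hp1 : 1 ≤ p) (hpn : p ≤ n) :
    2 ≤ lSeq m s t p ↔ ∃ j : ℕ, j < m ∧ t j = p :=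
  lp_ge_two_iff_mem_T_general m s t hsmono htmono hlen p hp1
end
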